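/- The set-cover gadget graph G(U,𝒮) contains no induced cycle on five or more vertices. -/

import Mathlib

/-- Vertices of the set-cover gadget graph: a vertex `s j` for every set `S_j`,
vertices `a i`, `b i`, `c i` for every universe element `u_i`, and a special vertex `g`. -/
inductive SCVert (n m : ℕ) where
  | s : Fin m → SCVert n m
  | a : Fin n → SCVert n m
  | b : Fin n → SCVert n m
  | c : Fin n → SCVert n m
  | g : SCVert n m
deriving DecidableEq

/-- The base relation for the edges of the set-cover gadget graph for the family
`S : Fin m → Set (Fin n)`. -/
def scRel (n m : ℕ) (S : Fin m → Set (Fin n)) : SCVert n m → SCVert n m → Prop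
  | .s _, .s _ => True
  | .g, .s _ => True
  | .g, .a _ => True
  | .g, .b _ => True
  | .a i, .c i' => i = i'
  | .b i, .c i' => i = i'
  | .c i, .s j => i ∈ S j
  | _, _ => False

/-- The set-cover gadget graph `G(U, 𝒮)`. -/
def scGadget (n m : ℕ) (S : Fin m → Set (Fin n)) : SimpleGraph (SCVert n m) :=
  SimpleGraph.fromRel (scRel n m S)

/-- `C` is (the vertex set of) an induced cycle on `ℓ` vertices of `G`. -/
def IsInducedCycle {α : Type*} (G : SimpleGraph α) (ℓ : ℕ) (C : Set α) : Prop :=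
  C.ncard = ℓ ∧ Nonempty (G.induce C ≃g SimpleGraph.cycleGraph ℓ)

/-! If `g` lies on an induced cycle of length at least five, the two cycle vertices at distance
two and three from `g` are non-neighbours of `g`, hence of the form `c i`, yet adjacent to each
other, while the `c i` form an independent set. Otherwise no `a i` or `b i` lies on the cycle,
since each has at most one neighbour other than `g`; so the cycle lives inside the clique of the
`s j` together with the independent set of the `c i`, and such a split graph has no induced cycle
of length four or more: a cycle vertex in the independent set would have two non-adjacent
cycle neighbours in the clique. -/

open SimpleGraph

section CycleGraph

open Fin.CommRing

variable {ℓ : ℕ} [NeZero ℓ]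

theorem Fin.add_natCast_ne_self (i : Fin ℓ) {d : ℕ} (hd : 0 < d) (hdℓ : d < ℓ) : i + d ≠ i := by
  rw [Ne, add_eq_left, Fin.ext_iff, Fin.val_cast_of_lt hdℓ, Fin.val_zero]
  omega

theorem SimpleGraph.cycleGraph_adj_add_one (hℓ : 2 ≤ ℓ) (i : Fin ℓ) :
    (cycleGraph ℓ).Adj i (i + 1) := by
  rw [cycleGraph_adj', add_sub_cancel_left, Fin.val_one', Nat.mod_eq_of_lt (by omega)]
  exact Or.inr rfl

theorem SimpleGraph.cycleGraph_not_adj_add (i : Fin ℓ) {d : ℕ} (hd : 2 ≤ d) (hdℓ : d + 2 ≤ ℓ) :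
    ¬ (cycleGraph ℓ).Adj i (i + d) := by
  rw [cycleGraph_adj', add_sub_cancel_left, sub_add_cancel_left, Fin.val_neg',
    Fin.val_cast_of_lt (by omega), Nat.mod_eq_of_lt (by omega)]
  omega

end CycleGraph

namespace IsInducedCycle

open Fin.CommRing

variable {α : Type*} {G : SimpleGraph α} {ℓ : ℕ} {C : Set α} {v : α}

theorem exists_embedding (hC : IsInducedCycle G ℓ C) :
    ∃ f : cycleGraph ℓ ↪g G, Set.range f = C := by
  obtain ⟨-, ⟨e⟩⟩ := hC
  refine ⟨(Embedding.induce C).comp e.symm.toEmbedding, ?_⟩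
  ext v
  constructor
  · rintro ⟨i, rfl⟩
    exact (e.symm i).2
  · intro hv
    exact ⟨e ⟨v, hv⟩, by simp⟩

theorem nonempty (hC : IsInducedCycle G ℓ C) (hℓ : 0 < ℓ) : C.Nonempty :=
  Set.nonempty_of_ncard_ne_zero (hC.1 ▸ hℓ.ne')

theorem exists_nonadj_neighbors (hC : IsInducedCycle G ℓ C) (hℓ : 4 ≤ ℓ) (hv : v ∈ C) :
    ∃ x ∈ C, ∃ y ∈ C, x ≠ y ∧ G.Adj v x ∧ G.Adj v y ∧ ¬ G.Adj x y := by
  obtain ⟨f, rfl⟩ := hC.exists_embedding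
  have : NeZero ℓ := ⟨by omega⟩
  obtain ⟨i, rfl⟩ := hv
  obtain ⟨j, rfl⟩ : ∃ j, i = j + 1 := ⟨i - 1, (sub_add_cancel i 1).symm⟩
  have hnadj := cycleGraph_not_adj_add j (d := 2) le_rfl hℓ
  have hne := Fin.add_natCast_ne_self j (d := 2) two_pos (by omega)
  push_cast at hnadj hne
  refine ⟨f j, ⟨j, rfl⟩, f (j + 2), ⟨_, rfl⟩, f.injective.ne hne.symm, ?_, ?_, ?_⟩
  · exact (f.map_adj_iff.2 (cycleGraph_adj_add_one (by omega) j)).symm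
  · rw [f.map_adj_iff, show j + 2 = j + 1 + 1 by ring]
    exact cycleGraph_adj_add_one (by omega) _
  · rwa [f.map_adj_iff]

theorem exists_adj_of_not_adj (hC : IsInducedCycle G ℓ C) (hℓ : 5 ≤ ℓ) (hv : v ∈ C) :
    ∃ x ∈ C, ∃ y ∈ C, x ≠ v ∧ y ≠ v ∧ ¬ G.Adj v x ∧ ¬ G.Adj v y ∧ G.Adj x y := by
  obtain ⟨f, rfl⟩ := hC.exists_embedding
  have : NeZero ℓ := ⟨by omega⟩
  obtain ⟨i, rfl⟩ := hv
  have hne₂ := Fin.add_natCast_ne_self i (d := 2) two_pos (by omega)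
  have hne₃ := Fin.add_natCast_ne_self i (d := 3) three_pos (by omega)
  have hnadj₂ := cycleGraph_not_adj_add i (d := 2) le_rfl (by omega)
  have hnadj₃ := cycleGraph_not_adj_add i (d := 3) (by omega) hℓ
  push_cast at hne₂ hne₃ hnadj₂ hnadj₃
  refine ⟨f (i + 2), ⟨_, rfl⟩, f (i + 3), ⟨_, rfl⟩, f.injective.ne hne₂, f.injective.ne hne₃,
    by rwa [f.map_adj_iff], by rwa [f.map_adj_iff], ?_⟩
  rw [f.map_adj_iff, show i + 3 = i + 2 + 1 by ring]
  exact cycleGraph_adj_add_one (by omega) _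

theorem not_mem_of_subsingleton_neighborSet (hC : IsInducedCycle G ℓ C) (hℓ : 4 ≤ ℓ)
    (hv : (G.neighborSet v ∩ C).Subsingleton) : v ∉ C := fun hvC ↦ by
  obtain ⟨x, hx, y, hy, hxy, hvx, hvy, -⟩ := hC.exists_nonadj_neighbors hℓ hvC
  exact hxy (hv ⟨hvx, hx⟩ ⟨hvy, hy⟩)

end IsInducedCycle

theorem not_isInducedCycle_of_subset_union {α : Type*} {G : SimpleGraph α} {ℓ : ℕ}
    {C K I : Set α} (hℓ : 4 ≤ ℓ) (hK : G.IsClique K) (hI : G.IsIndepSet I) (hC : C ⊆ K ∪ I) :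
    ¬ IsInducedCycle G ℓ C := by
  intro hcyc
  have hnotI : ∀ v ∈ C, v ∉ I := by
    intro v hv hvI
    obtain ⟨x, hx, y, hy, hxy, hvx, hvy, hnxy⟩ := hcyc.exists_nonadj_neighbors hℓ hv
    have hK' : ∀ z ∈ C, G.Adj v z → z ∈ K := fun z hz hvz ↦
      (hC hz).resolve_right fun hzI ↦ hI hvI hzI hvz.ne hvz
    exact hnxy (hK (hK' x hx hvx) (hK' y hy hvy) hxy)
  obtain ⟨v, hv⟩ := hcyc.nonempty (by omega)
  obtain ⟨x, hx, y, hy, hxy, -, -, hnxy⟩ := hcyc.exists_nonadj_neighbors hℓ hv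
  have hK' : ∀ z ∈ C, z ∈ K := fun z hz ↦ (hC hz).resolve_right (hnotI z hz)
  exact hnxy (hK (hK' x hx) (hK' y hy) hxy)

section Gadget

variable {n m : ℕ} {S : Fin m → Set (Fin n)}

theorem scGadget_isClique_range_s : (scGadget n m S).IsClique (Set.range .s) := by
  rintro _ ⟨j, rfl⟩ _ ⟨j', rfl⟩ h
  simpa [scGadget, scRel] using h

theorem scGadget_isIndepSet_range_c : (scGadget n m S).IsIndepSet (Set.range .c) := by
  rintro _ ⟨t, rfl⟩ _ ⟨t', rfl⟩ -
  simp [scGadget, scRel]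

theorem scGadget_adj_a_iff {t : Fin n} {v : SCVert n m} :
    (scGadget n m S).Adj (.a t) v ↔ v = .g ∨ v = .c t := by
  cases v <;> simp [scGadget, scRel, eq_comm]

theorem scGadget_adj_b_iff {t : Fin n} {v : SCVert n m} :
    (scGadget n m S).Adj (.b t) v ↔ v = .g ∨ v = .c t := by
  cases v <;> simp [scGadget, scRel, eq_comm]

theorem scGadget_not_adj_g_iff {v : SCVert n m} :
    ¬ (scGadget n m S).Adj .g v ↔ v = .g ∨ ∃ t, v = .c t := by
  cases v <;> simp [scGadget, scRel]

theorem IsInducedCycle.subset_range_s_union_range_c {ℓ : ℕ} {C : Set (SCVert n m)}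
    (hC : IsInducedCycle (scGadget n m S) ℓ C) (hℓ : 4 ≤ ℓ) (hg : .g ∉ C) :
    C ⊆ Set.range .s ∪ Set.range .c := by
  have hsub : ∀ t, ∀ v ∈ C, v = .g ∨ v = .c t → v = .c t := fun _ _ hv h ↦
    h.resolve_left fun hvg ↦ hg (hvg ▸ hv)
  intro v hv
  cases v with
  | s j => exact .inl ⟨j, rfl⟩
  | c t => exact .inr ⟨t, rfl⟩
  | g => exact absurd hv hg
  | a t =>
    refine absurd hv (hC.not_mem_of_subsingleton_neighborSet hℓ ?_)
    exact Set.subsingleton_singleton.anti fun w ⟨hw, hwC⟩ ↦ hsub t w hwC (scGadget_adj_a_iff.1 hw)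
  | b t =>
    refine absurd hv (hC.not_mem_of_subsingleton_neighborSet hℓ ?_)
    exact Set.subsingleton_singleton.anti fun w ⟨hw, hwC⟩ ↦ hsub t w hwC (scGadget_adj_b_iff.1 hw)

end Gadget

/-- The set-cover gadget graph contains no induced cycle on five or more vertices. -/
theorem stmt_11 (n m : ℕ) (S : Fin m → Set (Fin n)) (ℓ : ℕ) (hℓ : 5 ≤ ℓ)
    (C : Set (SCVert n m)) : ¬ IsInducedCycle (scGadget n m S) ℓ C := by
  intro hC
  by_cases hg : SCVert.g ∈ C
  · obtain ⟨x, -, y, -, hxg, hyg, hnx, hny, hxy⟩ := hC.exists_adj_of_not_adj hℓ hg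
    obtain ⟨t, rfl⟩ := (scGadget_not_adj_g_iff.1 hnx).resolve_left hxg
    obtain ⟨t', rfl⟩ := (scGadget_not_adj_g_iff.1 hny).resolve_left hyg
    exact scGadget_isIndepSet_range_c ⟨t, rfl⟩ ⟨t', rfl⟩ hxy.ne hxy
  · exact not_isInducedCycle_of_subset_union (by omega) scGadget_isClique_range_s
      scGadget_isIndepSet_range_c (hC.subset_range_s_union_range_c (by omega) hg) hC
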